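/- Let n ≥ 4 and let I ⊆ {1,…,n} be nonempty. Then ξ_I + ε^1_I H_s, where s is the unique element of I ∩ {n−1,n} when |I∩{n−1,n}| = 1, is the unique I-canonical element for the integer lattice ℤ^n of SO(2n). Moreover every I-canonical element ξ for ℤ^n satisfies 2a_1(ξ) ≤ 2n−2 (its uniton number for the standard representation, with highest weight L_1 and lowest weight −L_1) and 2(a_1(ξ)+a_2(ξ)) ≤ 4n−6 (its uniton number for the adjoint representation, with highest weight L_1+L_2 and lowest weight −(L_1+L_2)). -/
import Mathlib


/-- The duals of the simple roots of `so(2n)` (1-based index):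
`H_i = E_1+⋯+E_i` for `i ≤ n-2`, `H_{n-1} = (E_1+⋯+E_{n-1}-E_n)/2`,
`H_n = (E_1+⋯+E_{n-1}+E_n)/2`. -/
noncomputable def Hso (n i : ℕ) : Fin n → ℝ :=
  if i = n - 1 then (fun j => if (j : ℕ) + 2 ≤ n then 1 / 2 else -(1 / 2))
  else if i = n then (fun _ => 1 / 2)
  else fun j => if (j : ℕ) + 1 ≤ i then 1 else 0

/-- `ε^i_I = 1` if `|I ∩ {n-1, n}| = i`, and `0` otherwise. -/
def epsI (n : ℕ) (I : Finset ℕ) (i : ℕ) : ℕ :=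
  if (I ∩ {n - 1, n}).card = i then 1 else 0

/-- The integer lattice of `Spin(2n)`: integer vectors with even coordinate sum. -/
def JSpin (n : ℕ) : Set (Fin n → ℝ) :=
  {v | ∃ a : Fin n → ℤ, (∀ j, v j = a j) ∧ Even (∑ j, a j)}

/-- The set of `I`-canonical elements for a lattice `𝔏 ⊆ ℝ^n`. -/
def ICanonSet (n : ℕ) (𝔏 : Set (Fin n → ℝ)) (H : ℕ → Fin n → ℝ) (I : Finset ℕ) :
    Set (Fin n → ℝ) :=
  {ξ | ∃ c : ℕ → ℕ, (∀ i ∈ I, 1 ≤ c i) ∧ ξ = ∑ i ∈ I, c i • H i ∧ ξ ∈ 𝔏 ∧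
    ∀ c' : ℕ → ℕ, (∀ i ∈ I, 1 ≤ c' i ∧ c' i ≤ c i) →
      (∑ i ∈ I, c' i • H i) ∈ 𝔏 → (∑ i ∈ I, c' i • H i) = ξ}

/-- The integer lattice `ℤ^n` inside `ℝ^n` (the integer lattice of `SO(2n)`). -/
def IntLat (n : ℕ) : Set (Fin n → ℝ) := {v | ∀ j, ∃ m : ℤ, v j = m}

/-- Sum of the first `k` (1-based) coordinates of `v`. -/
def partialSum (n : ℕ) (v : Fin n → ℝ) (k : ℕ) : ℝ :=
  ∑ j ∈ Finset.univ.filter (fun j : Fin n => (j : ℕ) + 1 ≤ k), v j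

open Finset

variable {n : ℕ}

lemma Hso_low (hn : 4 ≤ n) {i : ℕ} (hi : i ≤ n - 2) (j : Fin n) :
    Hso n i j = if (j : ℕ) + 1 ≤ i then 1 else 0 := by
  unfold Hso
  rw [if_neg (by omega), if_neg (by omega)]

lemma Hso_nm1 (hn : 4 ≤ n) (j : Fin n) :
    Hso n (n - 1) j = if (j : ℕ) + 2 ≤ n then 1 / 2 else -(1 / 2) := by
  unfold Hso; rw [if_pos rfl]

lemma Hso_top (hn : 4 ≤ n) (j : Fin n) : Hso n n j = 1 / 2 := by
  unfold Hso; rw [if_neg (by omega), if_pos rfl]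

lemma coord (hn : 4 ≤ n) {I : Finset ℕ} (hI : I ⊆ Finset.Icc 1 n) (c : ℕ → ℕ) (j : Fin n) :
    (∑ i ∈ I, c i • Hso n i) j =
      (∑ i ∈ I.filter (· ≤ n - 2), if (j : ℕ) + 1 ≤ i then (c i : ℝ) else 0)
      + (if n - 1 ∈ I then (c (n - 1) : ℝ) else 0) * (if (j : ℕ) + 2 ≤ n then 1 / 2 else -(1 / 2))
      + (if n ∈ I then (c n : ℝ) else 0) * (1 / 2) := by
  have hsplit := Finset.sum_filter_add_sum_filter_not I (· ≤ n - 2)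
    (fun i => c i • Hso n i)
  rw [Finset.sum_apply, ← Finset.sum_filter_add_sum_filter_not I (· ≤ n - 2)
    (fun i => (c i • Hso n i) j)]
  have h1 : ∑ i ∈ I.filter (· ≤ n - 2), (c i • Hso n i) j
      = ∑ i ∈ I.filter (· ≤ n - 2), if (j : ℕ) + 1 ≤ i then (c i : ℝ) else 0 := by
    apply Finset.sum_congr rfl
    intro i hi
    rw [Finset.mem_filter] at hi
    rw [Pi.smul_apply, Hso_low hn hi.2, nsmul_eq_mul]
    split_ifs <;> simp
  have hset : I.filter (fun i => ¬ i ≤ n - 2) = ({n - 1, n} : Finset ℕ).filter (· ∈ I) := by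
    ext a
    simp only [Finset.mem_filter, Finset.mem_insert, Finset.mem_singleton]
    constructor
    · rintro ⟨ha, h2⟩
      have := hI ha
      rw [Finset.mem_Icc] at this
      exact ⟨by omega, ha⟩
    · rintro ⟨h, ha⟩
      exact ⟨ha, by omega⟩
  have h2 : ∑ i ∈ I.filter (fun i => ¬ i ≤ n - 2), (c i • Hso n i) j
      = (if n - 1 ∈ I then (c (n - 1) : ℝ) else 0) * (if (j : ℕ) + 2 ≤ n then 1 / 2 else -(1 / 2))
      + (if n ∈ I then (c n : ℝ) else 0) * (1 / 2) := by
    rw [hset, Finset.sum_filter, Finset.sum_pair (by omega : n - 1 ≠ n)]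
    rw [Pi.smul_apply, Pi.smul_apply, Hso_nm1 hn, Hso_top hn]
    split_ifs <;> simp [mul_comm] <;> ring
  rw [h1, h2]; ring

lemma sum_mem_intlat_iff (hn : 4 ≤ n) {I : Finset ℕ} (hI : I ⊆ Finset.Icc 1 n) (c : ℕ → ℕ) :
    (∑ i ∈ I, c i • Hso n i) ∈ IntLat n ↔
      Even ((if n - 1 ∈ I then c (n - 1) else 0) + (if n ∈ I then c n else 0)) := by
  set a := (if n - 1 ∈ I then c (n - 1) else 0) with ha
  set b := (if n ∈ I then c n else 0) with hb
  have haR : (if n - 1 ∈ I then (c (n - 1) : ℝ) else 0) = (a : ℝ) := by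
    rw [ha]; split_ifs <;> simp
  have hbR : (if n ∈ I then (c n : ℝ) else 0) = (b : ℝ) := by
    rw [hb]; split_ifs <;> simp
  constructor
  · intro h
    obtain ⟨m, hm⟩ := h ⟨0, by omega⟩
    rw [coord hn hI] at hm
    simp only [Fin.val_mk] at hm
    rw [if_pos (by omega : 0 + 2 ≤ n), haR, hbR] at hm
    have hfs : (∑ i ∈ I.filter (· ≤ n - 2), if 0 + 1 ≤ i then (c i : ℝ) else 0)
        = ((∑ i ∈ I.filter (· ≤ n - 2), c i : ℕ) : ℝ) := by
      push_cast
      refine Finset.sum_congr rfl fun i hi => ?_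
      rw [Finset.mem_filter] at hi
      have := hI hi.1
      rw [Finset.mem_Icc] at this
      rw [if_pos (by omega)]
    rw [hfs] at hm
    set N := ∑ i ∈ I.filter (· ≤ n - 2), c i
    have key : ((a + b : ℕ) : ℤ) = 2 * (m - N) := by
      have : ((a + b : ℕ) : ℝ) = ((2 * (m - N) : ℤ) : ℝ) := by push_cast; linarith
      exact_mod_cast this
    exact ⟨(m - N).toNat, by omega⟩
  · rintro ⟨k, hk⟩
    intro j
    rw [coord hn hI]
    have hfs : (∑ i ∈ I.filter (· ≤ n - 2), if (j : ℕ) + 1 ≤ i then (c i : ℝ) else 0)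
        = ((∑ i ∈ I.filter (· ≤ n - 2), if (j : ℕ) + 1 ≤ i then c i else 0 : ℕ) : ℝ) := by
      push_cast
      refine Finset.sum_congr rfl fun i _ => ?_
      split_ifs <;> simp
    rw [hfs, haR, hbR]
    set N := ∑ i ∈ I.filter (· ≤ n - 2), if (j : ℕ) + 1 ≤ i then c i else 0
    have hab : (a : ℝ) + b = k + k := by exact_mod_cast congrArg (Nat.cast : ℕ → ℝ) hk
    by_cases hj : (j : ℕ) + 2 ≤ n
    · exact ⟨(N : ℤ) + k, by rw [if_pos hj]; push_cast; linarith⟩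
    · exact ⟨(N : ℤ) + k - a, by rw [if_neg hj]; push_cast; linarith⟩

/-- The canonical coefficient function. -/
def cC (n e : ℕ) : ℕ → ℕ := fun i => 1 + e * (if i = n - 1 ∨ i = n then 1 else 0)

lemma cC_one (hn : 4 ≤ n) {e i : ℕ} (hi : i ≤ n - 2) : cC n e i = 1 := by
  have h : ¬(i = n - 1 ∨ i = n) := by omega
  simp [cC, h]

lemma cC_pos (n e i : ℕ) : 1 ≤ cC n e i := Nat.le_add_right 1 _

lemma hcard_eq (hn : 4 ≤ n) (I : Finset ℕ) :
    (I ∩ {n - 1, n}).card = (if n - 1 ∈ I then 1 else 0) + (if n ∈ I then 1 else 0) := by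
  have h12 : n - 1 ≠ n := by omega
  by_cases h1 : n - 1 ∈ I <;> by_cases h2 : n ∈ I <;>
    simp [Finset.inter_comm, Finset.insert_inter_of_mem, Finset.insert_inter_of_notMem,
      Finset.singleton_inter_of_mem, Finset.singleton_inter_of_notMem, h1, h2, h12]

lemma eps_le_one (n : ℕ) (I : Finset ℕ) : epsI n I 1 ≤ 1 := by
  rw [epsI]; split <;> omega

lemma cand_eq (hn : 4 ≤ n) (I : Finset ℕ) (e : ℕ) :
    (∑ i ∈ I, Hso n i) + e • ∑ s ∈ I ∩ ({n - 1, n} : Finset ℕ), Hso n s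
      = ∑ i ∈ I, cC n e i • Hso n i := by
  have hset : I ∩ ({n - 1, n} : Finset ℕ) = I.filter (fun i => i = n - 1 ∨ i = n) := by
    ext a; simp [Finset.mem_inter, Finset.mem_filter]
  rw [hset, Finset.sum_filter, Finset.smul_sum, ← Finset.sum_add_distrib]
  refine Finset.sum_congr rfl fun i _ => ?_
  unfold cC
  split_ifs <;> simp [add_smul, add_mul] <;> module

lemma key_even (hn : 4 ≤ n) {I : Finset ℕ} (hcard : (I ∩ {n - 1, n}).card = 1)
    {c : ℕ → ℕ}
    (hEv : Even ((if n - 1 ∈ I then c (n - 1) else 0) + (if n ∈ I then c n else 0)))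
    {i : ℕ} (hi : i ∈ I) (hior : i = n - 1 ∨ i = n) : Even (c i) := by
  rw [hcard_eq hn I] at hcard
  by_cases h1 : n - 1 ∈ I <;> by_cases h2 : n ∈ I <;>
    simp [h1, h2] at hcard hEv ⊢
  · rcases hior with rfl | rfl
    · exact hEv
    · exact absurd hi h2
  · rcases hior with rfl | rfl
    · exact absurd hi h1
    · exact hEv

lemma eps_one_card (n : ℕ) {I : Finset ℕ} (h : epsI n I 1 = 1) :
    (I ∩ {n - 1, n}).card = 1 := by
  rw [epsI] at h
  by_contra hc
  rw [if_neg hc] at h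
  omega

/-- Coefficients of any lattice element with positive coefficients dominate `cC`. -/
lemma lower (hn : 4 ≤ n) {I : Finset ℕ} {c : ℕ → ℕ}
    (hc1 : ∀ i ∈ I, 1 ≤ c i)
    (hEv : Even ((if n - 1 ∈ I then c (n - 1) else 0) + (if n ∈ I then c n else 0))) :
    ∀ i ∈ I, cC n (epsI n I 1) i ≤ c i := by
  intro i hi
  by_cases hior : i = n - 1 ∨ i = n
  · by_cases he1 : epsI n I 1 = 1
    · have hev := key_even hn (eps_one_card n he1) hEv hi hior
      obtain ⟨k, hk⟩ := hev
      have h1 := hc1 i hi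
      simp [cC, hior, he1]
      omega
    · have he0 : epsI n I 1 = 0 := by have := eps_le_one n I; omega
      rw [he0]
      simpa [cC] using hc1 i hi
  · have : cC n (epsI n I 1) i = 1 := by simp [cC, hior]
    rw [this]; exact hc1 i hi

lemma cC_zero (n i : ℕ) : cC n 0 i = 1 := by simp [cC]

/-- `cC` itself satisfies the parity condition. -/
lemma cC_even (hn : 4 ≤ n) (I : Finset ℕ) :
    Even ((if n - 1 ∈ I then cC n (epsI n I 1) (n - 1) else 0)
      + (if n ∈ I then cC n (epsI n I 1) n else 0)) := by
  have hcard := hcard_eq hn I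
  have h1 : cC n (epsI n I 1) (n - 1) = 1 + epsI n I 1 := by simp [cC]
  have h2 : cC n (epsI n I 1) n = 1 + epsI n I 1 := by simp [cC]
  rw [h1, h2, epsI]
  by_cases hm1 : n - 1 ∈ I <;> by_cases hm2 : n ∈ I <;>
    simp [hm1, hm2, Nat.even_iff] at hcard ⊢ <;> simp [hcard]

lemma half_sum_le (hn : 4 ≤ n) (I : Finset ℕ) :
    (if n - 1 ∈ I then cC n (epsI n I 1) (n - 1) else 0)
      + (if n ∈ I then cC n (epsI n I 1) n else 0) ≤ 2 := by
  have hcard := hcard_eq hn I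
  have h1 : cC n (epsI n I 1) (n - 1) = 1 + epsI n I 1 := by simp [cC]
  have h2 : cC n (epsI n I 1) n = 1 + epsI n I 1 := by simp [cC]
  rw [h1, h2, epsI]
  by_cases hm1 : n - 1 ∈ I <;> by_cases hm2 : n ∈ I <;>
    simp [hm1, hm2] at hcard ⊢ <;> simp [hcard] <;> omega

lemma coord_bound (hn : 4 ≤ n) {I : Finset ℕ} (hI : I ⊆ Finset.Icc 1 n)
    (j : Fin n) (hj : (j : ℕ) + 2 ≤ n) :
    (∑ i ∈ I, cC n (epsI n I 1) i • Hso n i) j ≤ ((n - 2 - (j : ℕ) : ℕ) : ℝ) + 1 := by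
  rw [coord hn hI]
  set e := epsI n I 1 with he
  have hF : (∑ i ∈ I.filter (· ≤ n - 2), if (j : ℕ) + 1 ≤ i then (cC n e i : ℝ) else 0)
      ≤ ((n - 2 - (j : ℕ) : ℕ) : ℝ) := by
    have h1 : (∑ i ∈ I.filter (· ≤ n - 2), if (j : ℕ) + 1 ≤ i then (cC n e i : ℝ) else 0)
        = ∑ i ∈ I.filter (· ≤ n - 2), if (j : ℕ) + 1 ≤ i then (1 : ℝ) else 0 := by
      refine Finset.sum_congr rfl fun i hi => ?_
      rw [Finset.mem_filter] at hi
      rw [cC_one hn hi.2]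
      norm_num
    rw [h1, Finset.sum_boole]
    have hsub : (I.filter (· ≤ n - 2)).filter (fun i => (j : ℕ) + 1 ≤ i)
        ⊆ Finset.Icc ((j : ℕ) + 1) (n - 2) := by
      intro i hi
      simp only [Finset.mem_filter] at hi
      rw [Finset.mem_Icc]
      exact ⟨hi.2, hi.1.2⟩
    have := Finset.card_le_card hsub
    rw [Nat.card_Icc] at this
    have h2 : n - 2 + 1 - ((j : ℕ) + 1) = n - 2 - (j : ℕ) := by omega
    rw [h2] at this
    exact_mod_cast this
  have hhalf : (if n - 1 ∈ I then (cC n e (n - 1) : ℝ) else 0)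
        * (if (j : ℕ) + 2 ≤ n then 1 / 2 else -(1 / 2))
      + (if n ∈ I then (cC n e n : ℝ) else 0) * (1 / 2) ≤ 1 := by
    rw [if_pos hj]
    have := half_sum_le hn I
    rw [← he] at this
    have hcast : (if n - 1 ∈ I then (cC n e (n - 1) : ℝ) else 0)
        + (if n ∈ I then (cC n e n : ℝ) else 0) ≤ 2 := by
      have h1 : (if n - 1 ∈ I then (cC n e (n - 1) : ℝ) else 0)
          = (((if n - 1 ∈ I then cC n e (n - 1) else 0) : ℕ) : ℝ) := by
        split_ifs <;> simp
      have h2 : (if n ∈ I then (cC n e n : ℝ) else 0)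
          = (((if n ∈ I then cC n e n else 0) : ℕ) : ℝ) := by
        split_ifs <;> simp
      rw [h1, h2]
      have : ((if n - 1 ∈ I then cC n e (n - 1) else 0) : ℕ)
          + ((if n ∈ I then cC n e n else 0) : ℕ) ≤ 2 := this
      exact_mod_cast Nat.cast_le.mpr (by exact_mod_cast this)
    linarith
  linarith

lemma ps1 (hn : 4 ≤ n) (v : Fin n → ℝ) :
    partialSum n v 1 = v ⟨0, by omega⟩ := by
  rw [partialSum, show Finset.univ.filter (fun j : Fin n => (j : ℕ) + 1 ≤ 1)
      = {(⟨0, by omega⟩ : Fin n)} from by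
    ext j
    simp only [Finset.mem_filter, Finset.mem_univ, true_and, Finset.mem_singleton, Fin.ext_iff]
    omega]
  exact Finset.sum_singleton _ _

lemma ps2 (hn : 4 ≤ n) (v : Fin n → ℝ) :
    partialSum n v 2 = v ⟨0, by omega⟩ + v ⟨1, by omega⟩ := by
  rw [partialSum, show Finset.univ.filter (fun j : Fin n => (j : ℕ) + 1 ≤ 2)
      = {(⟨0, by omega⟩ : Fin n), (⟨1, by omega⟩ : Fin n)} from by
    ext j
    simp only [Finset.mem_filter, Finset.mem_univ, true_and, Finset.mem_insert,
      Finset.mem_singleton, Fin.ext_iff]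
    omega]
  exact Finset.sum_pair (by simp [Fin.ext_iff])

/-- `ξ_I + ε^1_I H_s` (with `s` the unique element of `I ∩ {n-1,n}`
when `|I ∩ {n-1,n}| = 1`; the term is `0` when `ε^1_I = 0`, which is captured by the
sum `ε^1_I • Σ_{s ∈ I∩{n-1,n}} H_s`) is the unique `I`-canonical element of `SO(2n)`.
Every `I`-canonical element `ξ` satisfies `2a_1(ξ) ≤ 2n-2` and
`2(a_1(ξ)+a_2(ξ)) ≤ 4n-6`. -/
theorem so_even_canonical (n : ℕ) (hn : 4 ≤ n) (I : Finset ℕ)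
    (hI : I ⊆ Finset.Icc 1 n) (hne : I.Nonempty) :
    ICanonSet n (IntLat n) (Hso n) I =
      {(∑ i ∈ I, Hso n i) + epsI n I 1 • ∑ s ∈ I ∩ ({n - 1, n} : Finset ℕ), Hso n s} ∧
    (∀ ξ ∈ ICanonSet n (IntLat n) (Hso n) I,
      2 * partialSum n ξ 1 ≤ 2 * (n : ℝ) - 2 ∧
      2 * partialSum n ξ 2 ≤ 4 * (n : ℝ) - 6) := by
  have hcand := cand_eq hn I (epsI n I 1)
  have hA : ICanonSet n (IntLat n) (Hso n) I =
      {(∑ i ∈ I, Hso n i) + epsI n I 1 • ∑ s ∈ I ∩ ({n - 1, n} : Finset ℕ), Hso n s} := by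
    apply Set.eq_of_subset_of_subset
    · intro ξ hξ
      obtain ⟨c, hc1, hc2, hc3, hc4⟩ := hξ
      rw [Set.mem_singleton_iff, hcand]
      rw [hc2, sum_mem_intlat_iff hn hI] at hc3
      have hlow := lower hn hc1 hc3
      have hmem : (∑ i ∈ I, cC n (epsI n I 1) i • Hso n i) ∈ IntLat n :=
        (sum_mem_intlat_iff hn hI _).mpr (cC_even hn I)
      exact (hc4 _ (fun i hi => ⟨cC_pos n _ i, hlow i hi⟩) hmem).symm
    · intro ξ hξ
      rw [Set.mem_singleton_iff] at hξ
      refine ⟨cC n (epsI n I 1), fun i _ => cC_pos n _ i, by rw [hξ, hcand], ?_, ?_⟩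
      · rw [hξ, hcand]
        exact (sum_mem_intlat_iff hn hI _).mpr (cC_even hn I)
      · intro c' hc' hmem
        rw [sum_mem_intlat_iff hn hI] at hmem
        have hlow := lower hn (fun i hi => (hc' i hi).1) hmem
        rw [hξ, hcand]
        refine Finset.sum_congr rfl fun i hi => ?_
        rw [le_antisymm (hc' i hi).2 (hlow i hi)]
  refine ⟨hA, ?_⟩
  intro ξ hξ
  rw [hA, Set.mem_singleton_iff] at hξ
  rw [hξ, hcand]
  have h0 := coord_bound hn hI ⟨0, by omega⟩ (show (0 : ℕ) + 2 ≤ n by omega)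
  have h1 := coord_bound hn hI ⟨1, by omega⟩ (show (1 : ℕ) + 2 ≤ n by omega)
  rw [ps1 hn, ps2 hn]
  have e0 : ((n - 2 - ((⟨0, by omega⟩ : Fin n) : ℕ) : ℕ) : ℝ) = (n : ℝ) - 2 := by
    simp only [Fin.val_mk, Nat.sub_zero]
    rw [Nat.cast_sub (by omega)]
    norm_num
  have e1 : ((n - 2 - ((⟨1, by omega⟩ : Fin n) : ℕ) : ℕ) : ℝ) = (n : ℝ) - 3 := by
    simp only [Fin.val_mk]
    rw [show n - 2 - 1 = n - 3 from by omega, Nat.cast_sub (by omega)]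
    norm_num
  rw [e0] at h0
  rw [e1] at h1
  constructor <;> linarith
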